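/- Let x, x' ∈ Σ_q^n with supp(x−x') = {i_1 < i_2 < ⋯ < i_d}, d ≥ 2, and set i_0 = 0 and i_{d+1} = n+1; let 0 = j_0 < j_1 < ⋯ < j_m = n be the right endpoints of the runs of x and 0 = j'_0 < j'_1 < ⋯ < j'_{m'} = n the right endpoints of the runs of x'. Fix λ, λ' ∈ [d] with λ ≤ λ', and let S = |supp(x−x') ∖ [i_λ, i_{λ'}]| and Δ' = |{i ∈ [i_λ, i_{λ'}−1] : x_i ≠ x'_{i+1}}|. Then: (a) if d' < S + Δ', there is no pair (j_i, j'_{i'}) with i_{λ−1} < j'_{i'} ≤ i_λ ≤ i_{λ'} ≤ j_i < i_{λ'+1} and d_H(x_{[n]∖{j_i}}, x'_{[n]∖{j'_{i'}}}) = d'; and (b) if d' ≥ S + Δ', the number of pairs (j_i, j'_{i'}) with i_{λ−1} < j'_{i'} ≤ i_λ ≤ i_{λ'} ≤ j_i < i_{λ'+1} and d_H(x_{[n]∖{j_i}}, x'_{[n]∖{j'_{i'}}}) = d' is at most d' − S − Δ' + 1. -/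

import Mathlib

/-!
Deleting position `b` of `x'` and position `a ≥ b` of `x` compares `x` with `x'` shifted by one
on `[b, a - 1]` and unshifted elsewhere, so the distance is the number of mismatches on
`[1, b - 1]`, plus the shifted mismatches on `[b, a - 1]`, plus the mismatches on `[a + 1, n]`.
For `i_{λ-1} < b ≤ i_λ ≤ i_{λ'} ≤ a < i_{λ'+1}` the two outer terms contain the whole support
outside `[i_λ, i_{λ'}]` and the middle term contains the shifted mismatches counted by `Δ'`,
so the distance is at least `S + Δ'`.

Along the run ends `a` of `x` in `[i_{λ'}, i_{λ'+1})` the shifted count on `[i_λ, a - 1]`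
grows strictly (a run end `a < n` has `x_a ≠ x_{a+1} = x'_{a+1}`), and for fixed `a` the
distance decreases strictly along the run ends `b` of `x'` in `(i_{λ-1}, i_λ]`
(`x_b = x'_b ≠ x'_{b+1}`). Hence a pair at distance `d'` is
determined by that shifted count, a number in `[Δ', d' - S]`.
-/

/-- Sequences of length `n` are modelled as functions `ℕ → Fin q` whose relevant
positions are `1, …, n` (1-based, as in the paper). `delN x j` deletes position `j`. -/
def delN {q : ℕ} (x : ℕ → Fin q) (j : ℕ) : ℕ → Fin q :=
  fun i => if i < j then x i else x (i + 1)

/-- Hamming distance between two length-`n` sequences (positions `1, …, n`). -/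
def hdist {q : ℕ} (n : ℕ) (u v : ℕ → Fin q) : ℕ :=
  ((Finset.Icc 1 n).filter fun i => u i ≠ v i).card

/-- `j 0 = 0 < j 1 < ⋯ < j m = n` are the right endpoints of the runs of `x`. -/
def IsRunDecomp {q : ℕ} (n m : ℕ) (x : ℕ → Fin q) (j : ℕ → ℕ) : Prop :=
  j 0 = 0 ∧ j m = n ∧ (∀ i, i < m → j i < j (i + 1)) ∧
  (∀ i, 1 ≤ i → i ≤ m → ∀ a b, j (i - 1) + 1 ≤ a → a ≤ j i →
      j (i - 1) + 1 ≤ b → b ≤ j i → x a = x b) ∧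
  (∀ i, 1 ≤ i → i < m → x (j i) ≠ x (j i + 1))

open Finset

variable {q : ℕ}

def mismatchCount (u v : ℕ → Fin q) (lo hi : ℕ) : ℕ :=
  ((Icc lo hi).filter fun i => u i ≠ v i).card

namespace mismatchCount

variable {u v u' v' : ℕ → Fin q} {lo hi lo' hi' : ℕ}

lemma mono (hlo : lo' ≤ lo) (hhi : hi ≤ hi') :
    mismatchCount u v lo hi ≤ mismatchCount u v lo' hi' :=
  card_le_card (filter_subset_filter _ (Icc_subset_Icc hlo hhi))

lemma lt_of_mem {w : ℕ} (hlo : lo' ≤ lo) (hhi : hi ≤ hi') (hw : w ∈ Icc lo' hi')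
    (hw' : w ∉ Icc lo hi) (huv : u w ≠ v w) :
    mismatchCount u v lo hi < mismatchCount u v lo' hi' := by
  refine card_lt_card ((ssubset_iff_of_subset
    (filter_subset_filter _ (Icc_subset_Icc hlo hhi))).2 ⟨w, ?_, ?_⟩)
  · exact mem_filter.2 ⟨hw, huv⟩
  · exact fun h => hw' (mem_of_mem_filter _ h)

lemma add {mid : ℕ} (hlo : lo ≤ mid + 1) (hhi : mid ≤ hi) :
    mismatchCount u v lo mid + mismatchCount u v (mid + 1) hi = mismatchCount u v lo hi := by
  have hunion : Icc lo hi = Icc lo mid ∪ Icc (mid + 1) hi := by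
    ext k; simp only [mem_Icc, mem_union]; omega
  have hdisj : Disjoint (Icc lo mid) (Icc (mid + 1) hi) := by
    rw [disjoint_left]; intro k; simp only [mem_Icc]; omega
  unfold mismatchCount
  rw [hunion, filter_union, card_union_of_disjoint (disjoint_filter_filter hdisj)]

lemma congr (hu : ∀ i ∈ Icc lo hi, u i = u' i) (hv : ∀ i ∈ Icc lo hi, v i = v' i) :
    mismatchCount u v lo hi = mismatchCount u' v' lo hi := by
  unfold mismatchCount
  rw [filter_congr fun i hi => by rw [hu i hi, hv i hi]]

lemma eq_zero (h : ∀ i ∈ Icc lo hi, u i = v i) : mismatchCount u v lo hi = 0 := by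
  unfold mismatchCount
  rw [card_eq_zero, filter_eq_empty_iff]
  exact fun i hi => not_not.2 (h i hi)

lemma comp_succ :
    mismatchCount (fun i => u (i + 1)) (fun i => v (i + 1)) lo hi
      = mismatchCount u v (lo + 1) (hi + 1) := by
  unfold mismatchCount
  rw [← map_add_right_Icc, filter_map, card_map]
  rfl

end mismatchCount

lemma hdist_delN_delN {x x' : ℕ → Fin q} {n a b : ℕ} (hb : 1 ≤ b) (hba : b ≤ a)
    (han : a ≤ n) :
    hdist (n - 1) (delN x a) (delN x' b) = mismatchCount x x' 1 (b - 1)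
      + mismatchCount x (fun i => x' (i + 1)) b (a - 1) + mismatchCount x x' (a + 1) n := by
  change mismatchCount _ _ 1 (n - 1) = _
  rw [← mismatchCount.add (mid := a - 1) (by omega) (by omega),
    ← mismatchCount.add (mid := b - 1) (lo := 1) (by omega) (by omega)]
  have h₁ : mismatchCount (delN x a) (delN x' b) 1 (b - 1) = mismatchCount x x' 1 (b - 1) :=
    mismatchCount.congr (fun i hi => if_pos (by simp only [mem_Icc] at hi; omega))
      (fun i hi => if_pos (by simp only [mem_Icc] at hi; omega))
  have h₂ : mismatchCount (delN x a) (delN x' b) (b - 1 + 1) (a - 1)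
      = mismatchCount x (fun i => x' (i + 1)) b (a - 1) := by
    rw [Nat.sub_add_cancel hb]
    exact mismatchCount.congr (fun i hi => if_pos (by simp only [mem_Icc] at hi; omega))
      (fun i hi => if_neg (by simp only [mem_Icc] at hi; omega))
  have h₃ : mismatchCount (delN x a) (delN x' b) (a - 1 + 1) (n - 1)
      = mismatchCount x x' (a + 1) n := by
    rw [Nat.sub_add_cancel (hb.trans hba), ← Nat.sub_add_cancel (hb.trans (hba.trans han)),
      ← mismatchCount.comp_succ, Nat.add_sub_cancel]
    exact mismatchCount.congr (fun i hi => if_neg (by simp only [mem_Icc] at hi; omega))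
      (fun i hi => if_neg (by simp only [mem_Icc] at hi; omega))
  rw [h₁, h₂, h₃]

namespace IsRunDecomp

variable {n m : ℕ} {x : ℕ → Fin q} {j : ℕ → ℕ}

lemma strictMonoOn (hx : IsRunDecomp n m x j) : StrictMonoOn j (Set.Iic m) :=
  strictMonoOn_Iic_of_lt_succ fun i hi => by
    simpa only [Order.succ_eq_add_one] using hx.2.2.1 i hi

lemma apply_ne_apply_succ (hx : IsRunDecomp n m x j) {s : ℕ} (hs : s ∈ Set.Icc 1 m)
    (hlt : j s < n) : x (j s) ≠ x (j s + 1) := by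
  refine hx.2.2.2.2 s hs.1 (lt_of_le_of_ne hs.2 ?_)
  rintro rfl
  exact hlt.ne hx.2.1

end IsRunDecomp

section Window

-- `L, A, B, R` stand for `i_{λ-1}, i_λ, i_{λ'}, i_{λ'+1}`.
variable {n m m' L A B R a b : ℕ} {x x' : ℕ → Fin q} {j j' : ℕ → ℕ}

lemma card_support_sdiff_le (hgapL : ∀ k, L < k → k < A → x k = x' k)
    (hgapR : ∀ k, B < k → k < R → x k = x' k) (hb : L < b) (ha : a < R) :
    (((Icc 1 n).filter fun k => x k ≠ x' k) \ Icc A B).card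
      ≤ mismatchCount x x' 1 (b - 1) + mismatchCount x x' (a + 1) n := by
  refine (card_le_card fun k hk => ?_).trans (card_union_le _ _)
  simp only [mem_sdiff, mem_filter, mem_Icc, mem_union, not_and_or, not_le] at hk ⊢
  obtain ⟨⟨⟨hk1, hkn⟩, hne⟩, hkA | hkB⟩ := hk
  · have hkL : k ≤ L := by by_contra h; exact hne (hgapL k (by omega) hkA)
    exact Or.inl ⟨⟨hk1, by omega⟩, hne⟩
  · have hkR : R ≤ k := by by_contra h; exact hne (hgapR k hkB (by omega))
    exact Or.inr ⟨⟨by omega, hkn⟩, hne⟩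

lemma add_mismatchCount_le_hdist_delN (hAB : A ≤ B) (hRn : R ≤ n + 1)
    (hgapL : ∀ k, L < k → k < A → x k = x' k) (hgapR : ∀ k, B < k → k < R → x k = x' k)
    (hb : L < b) (hbA : b ≤ A) (haB : B ≤ a) (haR : a < R) :
    (((Icc 1 n).filter fun k => x k ≠ x' k) \ Icc A B).card
        + mismatchCount x (fun i => x' (i + 1)) A (a - 1)
      ≤ hdist (n - 1) (delN x a) (delN x' b) := by
  rw [hdist_delN_delN (by omega) (by omega) (by omega)]
  have hS := card_support_sdiff_le (n := n) hgapL hgapR hb haR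
  have hΔ := mismatchCount.mono (u := x) (v := fun i => x' (i + 1)) (hi := a - 1) hbA le_rfl
  omega

lemma strictMonoOn_mismatchCount_shift (hx : IsRunDecomp n m x j) (hA : 1 ≤ A) (hAB : A ≤ B)
    (hRn : R ≤ n + 1) (hgapR : ∀ k, B < k → k < R → x k = x' k) :
    StrictMonoOn (fun a => mismatchCount x (fun i => x' (i + 1)) A (a - 1))
      (j '' Set.Icc 1 m ∩ Set.Ico B R) := by
  rintro _ ⟨⟨s, hs, rfl⟩, hBs, -⟩ a ⟨-, -, haR⟩ hlt
  have hrun := hx.apply_ne_apply_succ hs (by omega)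
  have hagree := hgapR (j s + 1) (by omega) (by omega)
  refine mismatchCount.lt_of_mem (w := j s) le_rfl (by omega : j s - 1 ≤ a - 1)
    (mem_Icc.2 ⟨by omega, by omega⟩) (by simp only [mem_Icc]; omega) ?_
  rwa [← hagree]

lemma strictAntiOn_hdist_delN (hx' : IsRunDecomp n m' x' j')
    (hgapL : ∀ k, L < k → k < A → x k = x' k) (hAa : A ≤ a) (han : a ≤ n) :
    StrictAntiOn (fun b => hdist (n - 1) (delN x a) (delN x' b))
      (j' '' Set.Icc 1 m' ∩ Set.Ioc L A) := by
  rintro _ ⟨⟨s, hs, rfl⟩, hLs, -⟩ b ⟨-, -, hbA⟩ hlt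
  simp only
  rw [hdist_delN_delN (by omega) (by omega) han, hdist_delN_delN (by omega) (by omega) han]
  have hprefix : mismatchCount x x' 1 (b - 1) = mismatchCount x x' 1 (j' s - 1) := by
    rw [← mismatchCount.add (mid := j' s - 1) (by omega) (by omega), Nat.sub_add_cancel (by omega),
      mismatchCount.eq_zero (lo := j' s) (hi := b - 1) fun i hi => hgapL i (by simp only [mem_Icc] at hi; omega)
        (by simp only [mem_Icc] at hi; omega), add_zero]
  have hmiddle : mismatchCount x (fun i => x' (i + 1)) b (a - 1)
      < mismatchCount x (fun i => x' (i + 1)) (j' s) (a - 1) := by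
    refine mismatchCount.lt_of_mem (w := j' s) hlt.le le_rfl (mem_Icc.2 ⟨le_rfl, by omega⟩)
      (by simp only [mem_Icc]; omega) ?_
    rw [hgapL (j' s) hLs (by omega)]
    exact hx'.apply_ne_apply_succ hs (by omega)
  omega

theorem filter_hdist_delN_eq_empty (hAB : A ≤ B) (hRn : R ≤ n + 1)
    (hgapL : ∀ k, L < k → k < A → x k = x' k) (hgapR : ∀ k, B < k → k < R → x k = x' k)
    {d' : ℕ} (hd' : d' < (((Icc 1 n).filter fun k => x k ≠ x' k) \ Icc A B).card
      + mismatchCount x (fun i => x' (i + 1)) A (B - 1)) :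
    (Icc 1 m ×ˢ Icc 1 m').filter (fun p => L < j' p.2 ∧ j' p.2 ≤ A ∧ B ≤ j p.1 ∧ j p.1 < R ∧
      hdist (n - 1) (delN x (j p.1)) (delN x' (j' p.2)) = d') = ∅ := by
  refine filter_false_of_mem fun p _ ⟨hb, hbA, haB, haR, hd⟩ => ?_
  have hlow := add_mismatchCount_le_hdist_delN hAB hRn hgapL hgapR hb hbA haB haR
  have hΔ := mismatchCount.mono (u := x) (v := fun i => x' (i + 1)) (lo := A)
    (hi := B - 1) le_rfl (by omega : B - 1 ≤ j p.1 - 1)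
  omega

theorem card_filter_hdist_delN_le (hx : IsRunDecomp n m x j) (hx' : IsRunDecomp n m' x' j')
    (hAB : A ≤ B) (hRn : R ≤ n + 1)
    (hgapL : ∀ k, L < k → k < A → x k = x' k) (hgapR : ∀ k, B < k → k < R → x k = x' k)
    (d' : ℕ) :
    ((Icc 1 m ×ˢ Icc 1 m').filter fun p => L < j' p.2 ∧ j' p.2 ≤ A ∧ B ≤ j p.1 ∧ j p.1 < R ∧
      hdist (n - 1) (delN x (j p.1)) (delN x' (j' p.2)) = d').card
      ≤ d' - (((Icc 1 n).filter fun k => x k ≠ x' k) \ Icc A B).card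
        - mismatchCount x (fun i => x' (i + 1)) A (B - 1) + 1 := by
  calc _ ≤ (Icc (mismatchCount x (fun i => x' (i + 1)) A (B - 1))
        (d' - (((Icc 1 n).filter fun k => x k ≠ x' k) \ Icc A B).card)).card :=
        card_le_card_of_injOn (fun p => mismatchCount x (fun i => x' (i + 1)) A (j p.1 - 1)) ?_ ?_
    _ ≤ _ := by rw [Nat.card_Icc]; omega
  · rintro p hp
    simp only [coe_filter, mem_product, mem_Icc, Set.mem_ofPred_eq] at hp
    obtain ⟨-, hb, hbA, haB, haR, hd⟩ := hp
    have hlow := add_mismatchCount_le_hdist_delN hAB hRn hgapL hgapR hb hbA haB haR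
    have hΔ := mismatchCount.mono (u := x) (v := fun i => x' (i + 1)) (lo := A)
      (hi := B - 1) le_rfl (by omega : B - 1 ≤ j p.1 - 1)
    simp only [coe_Icc, Set.mem_Icc]
    omega
  · rintro p₁ hp₁ p₂ hp₂ hφ
    simp only [coe_filter, mem_product, mem_Icc, Set.mem_ofPred_eq] at hp₁ hp₂
    obtain ⟨⟨⟨hs₁, hsm₁⟩, ht₁, htm₁⟩, hb₁, hbA₁, haB₁, haR₁, hd₁⟩ := hp₁
    obtain ⟨⟨⟨hs₂, hsm₂⟩, ht₂, htm₂⟩, hb₂, hbA₂, haB₂, haR₂, hd₂⟩ := hp₂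
    have ha : j p₁.1 = j p₂.1 := (strictMonoOn_mismatchCount_shift hx (by omega) hAB hRn hgapR).injOn
      ⟨⟨p₁.1, ⟨hs₁, hsm₁⟩, rfl⟩, haB₁, haR₁⟩ ⟨⟨p₂.1, ⟨hs₂, hsm₂⟩, rfl⟩, haB₂, haR₂⟩ hφ
    have hb : j' p₁.2 = j' p₂.2 :=
      (strictAntiOn_hdist_delN hx' hgapL (a := j p₂.1) (by omega) (by omega)).injOn
        ⟨⟨p₁.2, ⟨ht₁, htm₁⟩, rfl⟩, hb₁, hbA₁⟩ ⟨⟨p₂.2, ⟨ht₂, htm₂⟩, rfl⟩, hb₂, hbA₂⟩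
        (by rw [ha] at hd₁; exact hd₁.trans hd₂.symm)
    exact Prod.ext (hx.strictMonoOn.injOn hsm₁ hsm₂ ha) (hx'.strictMonoOn.injOn htm₁ htm₂ hb)

end Window

lemma apply_eq_of_lt_of_lt_succ {x x' : ℕ → Fin q} {n d t k : ℕ} {e : ℕ → ℕ}
    (he : StrictMonoOn e (Set.Iic (d + 1))) (hetop : e (d + 1) = n + 1)
    (hsupp : ((Icc 1 n).filter fun k => x k ≠ x' k) = (Icc 1 d).image e)
    (ht : t ≤ d) (hk : e t < k) (hk' : k < e (t + 1)) : x k = x' k := by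
  by_contra hne
  have hkn : k ≤ n := by
    have := he.monotoneOn (Set.mem_Iic.2 (by omega)) (Set.mem_Iic.2 le_rfl)
      (by omega : t + 1 ≤ d + 1)
    omega
  have hmem : k ∈ (Icc 1 n).filter fun k => x k ≠ x' k :=
    mem_filter.2 ⟨mem_Icc.2 ⟨by omega, hkn⟩, hne⟩
  rw [hsupp] at hmem
  obtain ⟨s, hs, rfl⟩ := mem_image.1 hmem
  have hsd : s ≤ d + 1 := by simp only [mem_Icc] at hs; omega
  have hts := (he.lt_iff_lt (Set.mem_Iic.2 (by omega)) hsd).1 hk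
  have hst := (he.lt_iff_lt hsd (Set.mem_Iic.2 (by omega))).1 hk'
  omega

theorem stmt14_general (q n m m' d : ℕ)
    (x x' : ℕ → Fin q) (e : ℕ → ℕ)
    (hetop : e (d + 1) = n + 1)
    (hemono : ∀ a b, a < b → b ≤ d + 1 → e a < e b)
    (hsupp : ((Finset.Icc 1 n).filter fun k => x k ≠ x' k) = (Finset.Icc 1 d).image e)
    (j j' : ℕ → ℕ)
    (hx : IsRunDecomp n m x j) (hx' : IsRunDecomp n m' x' j')
    (lam lam' : ℕ) (hlam1 : 1 ≤ lam) (hlamle : lam ≤ lam') (hlam'd : lam' ≤ d)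
    (S Δ' : ℕ)
    (hS : S = (((Finset.Icc 1 n).filter fun k => x k ≠ x' k) \
        Finset.Icc (e lam) (e lam')).card)
    (hΔ' : Δ' = ((Finset.Icc (e lam) (e lam' - 1)).filter fun i => x i ≠ x' (i + 1)).card)
    (d' : ℕ) :
    (d' < S + Δ' →
      (Finset.Icc 1 m ×ˢ Finset.Icc 1 m').filter (fun p =>
        e (lam - 1) < j' p.2 ∧ j' p.2 ≤ e lam ∧ e lam' ≤ j p.1 ∧ j p.1 < e (lam' + 1) ∧
        hdist (n - 1) (delN x (j p.1)) (delN x' (j' p.2)) = d') = ∅) ∧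
    (S + Δ' ≤ d' →
      ((Finset.Icc 1 m ×ˢ Finset.Icc 1 m').filter fun p =>
        e (lam - 1) < j' p.2 ∧ j' p.2 ≤ e lam ∧ e lam' ≤ j p.1 ∧ j p.1 < e (lam' + 1) ∧
        hdist (n - 1) (delN x (j p.1)) (delN x' (j' p.2)) = d').card
          ≤ d' - S - Δ' + 1) := by
  have he : StrictMonoOn e (Set.Iic (d + 1)) := fun a _ b hb hab => hemono a b hab hb
  have hgap (t : ℕ) (ht : t ≤ d) (k : ℕ) : e t < k → k < e (t + 1) → x k = x' k :=
    apply_eq_of_lt_of_lt_succ he hetop hsupp ht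
  have hgapL : ∀ k, e (lam - 1) < k → k < e lam → x k = x' k := by
    simpa only [Nat.sub_add_cancel hlam1] using hgap (lam - 1) (by omega)
  have hAB : e lam ≤ e lam' := he.monotoneOn (by simp only [Set.mem_Iic]; omega)
    (by simp only [Set.mem_Iic]; omega) hlamle
  have hRn : e (lam' + 1) ≤ n + 1 := hetop ▸ he.monotoneOn
    (by simp only [Set.mem_Iic]; omega) (Set.mem_Iic.2 le_rfl) (by omega)
  subst hS hΔ'
  exact ⟨filter_hdist_delN_eq_empty hAB hRn hgapL (hgap lam' hlam'd),
    fun _ => card_filter_hdist_delN_le hx hx' hAB hRn hgapL (hgap lam' hlam'd) d'⟩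

/-- Here `e` enumerates the support: `e 0 = 0 = i₀`, `e (d+1) = n+1 = i_{d+1}`,
`e` is strictly increasing on `{0, …, d+1}`, and
`supp(x − x') = {e 1 < e 2 < ⋯ < e d}`.  With `S = |supp(x − x') ∖ [i_λ, i_{λ'}]|` and
`Δ' = |{i ∈ [i_λ, i_{λ'}−1] : x_i ≠ x'_{i+1}}|`:
(a) if `d' < S + Δ'` there is no pair of run endpoints `(j_i, j'_{i'})` with
`i_{λ−1} < j'_{i'} ≤ i_λ ≤ i_{λ'} ≤ j_i < i_{λ'+1}` and
`d_H(x_{[n]∖{j_i}}, x'_{[n]∖{j'_{i'}}}) = d'`; and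
(b) if `d' ≥ S + Δ'` there are at most `d' − S − Δ' + 1` such pairs. -/
theorem stmt14 (q n m m' d : ℕ) (hq : 2 ≤ q) (hd : 2 ≤ d)
    (x x' : ℕ → Fin q) (e : ℕ → ℕ)
    (he0 : e 0 = 0) (hetop : e (d + 1) = n + 1)
    (hemono : ∀ a b, a < b → b ≤ d + 1 → e a < e b)
    (hsupp : ((Finset.Icc 1 n).filter fun k => x k ≠ x' k) = (Finset.Icc 1 d).image e)
    (j j' : ℕ → ℕ)
    (hx : IsRunDecomp n m x j) (hx' : IsRunDecomp n m' x' j')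
    (lam lam' : ℕ) (hlam1 : 1 ≤ lam) (hlamle : lam ≤ lam') (hlam'd : lam' ≤ d)
    (S Δ' : ℕ)
    (hS : S = (((Finset.Icc 1 n).filter fun k => x k ≠ x' k) \
        Finset.Icc (e lam) (e lam')).card)
    (hΔ' : Δ' = ((Finset.Icc (e lam) (e lam' - 1)).filter fun i => x i ≠ x' (i + 1)).card)
    (d' : ℕ) :
    (d' < S + Δ' →
      (Finset.Icc 1 m ×ˢ Finset.Icc 1 m').filter (fun p =>
        e (lam - 1) < j' p.2 ∧ j' p.2 ≤ e lam ∧ e lam' ≤ j p.1 ∧ j p.1 < e (lam' + 1) ∧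
        hdist (n - 1) (delN x (j p.1)) (delN x' (j' p.2)) = d') = ∅) ∧
    (S + Δ' ≤ d' →
      ((Finset.Icc 1 m ×ˢ Finset.Icc 1 m').filter fun p =>
        e (lam - 1) < j' p.2 ∧ j' p.2 ≤ e lam ∧ e lam' ≤ j p.1 ∧ j p.1 < e (lam' + 1) ∧
        hdist (n - 1) (delN x (j p.1)) (delN x' (j' p.2)) = d').card
          ≤ d' - S - Δ' + 1) :=
  stmt14_general q n m m' d x x' e hetop hemono hsupp j j' hx hx' lam lam' hlam1 hlamle hlam'd S Δ'
    hS hΔ' d'
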